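/- Let u be a spacelike function on ℝⁿ\A with A ⊂ B₁, and suppose that max_{∂B₁} u = −min_{∂B₁} u = 1 − ε₀ for some ε₀ ∈ (0,1). Then max_{∂B_R} |u| ≤ R − ε₀ for every R > 1, and for every R ≥ (1+ε₀²)/(2ε₀) one has |u(x) − u(y)| < |x − y| for all x, y ∈ ∂B_R with x ≠ y. -/

import Mathlib

/-!
Outside the unit ball, compare `x` with its radial projection `‖x‖⁻¹ • x` on the unit sphere: the
radial segment avoids `B₁`, so `|u x| ≤ (‖x‖ - 1) + (1 - ε₀)`. For two points of `∂B_R`, either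
their chord avoids `B₁` and spacelikeness applies directly, or it meets `B₁`; then the chord is
longer than `2√(R² - 1)`, while `|u x - u y| ≤ 2(R - ε₀)`, and `R - ε₀ ≤ √(R² - 1)` is exactly
`R ≥ (1 + ε₀²)/(2ε₀)`.
-/

open MeasureTheory Filter Asymptotics Metric Set Bornology
open scoped InnerProductSpace

noncomputable section

/-- The maximal surface equation `div (Du / √(1 - |Du|²)) = 0` holding at a point `x`. -/
def MaxSurfEqAt {n : ℕ} (u : EuclideanSpace ℝ (Fin n) → ℝ) (x : EuclideanSpace ℝ (Fin n)) :
    Prop :=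
  ∑ i : Fin n,
      fderiv ℝ
        (fun y => (Real.sqrt (1 - ‖gradient u y‖ ^ 2))⁻¹ *
          fderiv ℝ u y (EuclideanSpace.single i 1)) x (EuclideanSpace.single i 1) = 0

/-- `u` is an exterior solution of the maximal surface equation on `ℝⁿ \ A`:
it is `C²` there, strictly spacelike (`|Du| < 1`), and solves the equation. -/
def IsExteriorSolution {n : ℕ} (A : Set (EuclideanSpace ℝ (Fin n)))
    (u : EuclideanSpace ℝ (Fin n) → ℝ) : Prop :=
  ContDiffOn ℝ 2 u Aᶜ ∧ (∀ x ∈ Aᶜ, ‖gradient u x‖ < 1) ∧ ∀ x ∈ Aᶜ, MaxSurfEqAt u x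

/-- `u` is spacelike on `Ω`: `|u x - u y| < |x - y|` whenever `x ≠ y` and the segment
from `x` to `y` lies in `Ω`. -/
def IsSpacelikeOn {n : ℕ} (u : EuclideanSpace ℝ (Fin n) → ℝ)
    (Ω : Set (EuclideanSpace ℝ (Fin n))) : Prop :=
  ∀ x ∈ Ω, ∀ y ∈ Ω, x ≠ y → segment ℝ x y ⊆ Ω → |u x - u y| < ‖x - y‖

section Geometry

variable {E : Type*} [NormedAddCommGroup E]

theorem segment_inv_norm_smul_subset_compl_ball [NormedSpace ℝ E] {x : E} (hx : 1 ≤ ‖x‖) :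
    segment ℝ x (‖x‖⁻¹ • x) ⊆ (ball 0 1)ᶜ := by
  rintro _ ⟨a, b, ha, hb, hab, rfl⟩
  have hx0 : ‖x‖ ≠ 0 := by positivity
  rw [mem_compl_iff, mem_ball_zero_iff, not_lt, smul_smul, ← add_smul, norm_smul,
    Real.norm_of_nonneg (by positivity), add_mul, mul_assoc, inv_mul_cancel₀ hx0]
  nlinarith

theorem norm_sub_inv_norm_smul [NormedSpace ℝ E] {x : E} (hx : 1 ≤ ‖x‖) :
    ‖x - ‖x‖⁻¹ • x‖ = ‖x‖ - 1 := by
  have hx0 : ‖x‖ ≠ 0 := by positivity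
  have hx1 : ‖x‖⁻¹ ≤ 1 := inv_le_one_of_one_le₀ hx
  rw [show x - ‖x‖⁻¹ • x = (1 - ‖x‖⁻¹) • x by rw [sub_smul, one_smul], norm_smul,
    Real.norm_of_nonneg (by linarith), sub_mul, inv_mul_cancel₀ hx0, one_mul]

variable [InnerProductSpace ℝ E]

theorem norm_smul_add_smul_sq {a b : ℝ} (hab : a + b = 1) (x y : E) :
    ‖a • x + b • y‖ ^ 2 = a * ‖x‖ ^ 2 + b * ‖y‖ ^ 2 - a * b * ‖x - y‖ ^ 2 := by
  rw [norm_add_sq_real, norm_sub_sq_real, norm_smul, norm_smul, real_inner_smul_left,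
    real_inner_smul_right, mul_pow, mul_pow, Real.norm_eq_abs, Real.norm_eq_abs, sq_abs, sq_abs]
  obtain rfl := eq_sub_of_add_eq hab
  ring

theorem four_mul_sq_sub_one_lt_norm_sub_sq {x y z : E} {R : ℝ} (hx : ‖x‖ = R) (hy : ‖y‖ = R)
    (hz : z ∈ segment ℝ x y) (hz1 : ‖z‖ < 1) : 4 * (R ^ 2 - 1) < ‖x - y‖ ^ 2 := by
  obtain ⟨a, b, ha, hb, hab, rfl⟩ := hz
  have hz2 := norm_smul_add_smul_sq hab x y
  rw [hx, hy] at hz2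
  have hab4 : 4 * (a * b) ≤ 1 := by nlinarith [sq_nonneg (a - b)]
  nlinarith [norm_nonneg (a • x + b • y), sq_nonneg ‖x - y‖]

end Geometry

section Spacelike

variable {n : ℕ} {u : EuclideanSpace ℝ (Fin n) → ℝ}

theorem IsSpacelikeOn.mono {Ω Ω' : Set (EuclideanSpace ℝ (Fin n))} (hu : IsSpacelikeOn u Ω)
    (h : Ω' ⊆ Ω) : IsSpacelikeOn u Ω' :=
  fun x hx y hy hxy hseg ↦ hu x (h hx) y (h hy) hxy (hseg.trans h)

theorem IsSpacelikeOn.abs_le_of_compl_ball (hu : IsSpacelikeOn u (ball 0 1)ᶜ) {M : ℝ}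
    (hM : ∀ w ∈ sphere (0 : EuclideanSpace ℝ (Fin n)) 1, |u w| ≤ M)
    {x : EuclideanSpace ℝ (Fin n)} (hx : 1 ≤ ‖x‖) : |u x| ≤ ‖x‖ - 1 + M := by
  set x' := ‖x‖⁻¹ • x
  have hx' : x' ∈ sphere (0 : EuclideanSpace ℝ (Fin n)) 1 := by
    rw [mem_sphere_zero_iff_norm, norm_smul, norm_inv, norm_norm,
      inv_mul_cancel₀ (by positivity)]
  have hseg := segment_inv_norm_smul_subset_compl_ball hx
  have hxx' : |u x - u x'| ≤ ‖x‖ - 1 := by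
    rw [← norm_sub_inv_norm_smul hx]
    rcases eq_or_ne x x' with h | h
    · simp [← h]
    · exact (hu x (hseg (left_mem_segment ℝ _ _)) x' (hseg (right_mem_segment ℝ _ _)) h
        hseg).le
  linarith [abs_sub_abs_le_abs_sub (u x) (u x'), hM x' hx']

theorem IsSpacelikeOn.abs_sub_lt_of_compl_ball (hu : IsSpacelikeOn u (ball 0 1)ᶜ) {R M : ℝ}
    (hM : ∀ w ∈ sphere (0 : EuclideanSpace ℝ (Fin n)) R, |u w| ≤ M) (hMR : M ^ 2 ≤ R ^ 2 - 1)
    {x y : EuclideanSpace ℝ (Fin n)} (hx : x ∈ sphere 0 R) (hy : y ∈ sphere 0 R) (hxy : x ≠ y) :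
    |u x - u y| < ‖x - y‖ := by
  by_cases hseg : segment ℝ x y ⊆ (ball 0 1)ᶜ
  · exact hu x (hseg (left_mem_segment ℝ _ _)) y (hseg (right_mem_segment ℝ _ _)) hxy hseg
  obtain ⟨z, hz, hz1⟩ := not_subset.1 hseg
  rw [notMem_compl_iff, mem_ball_zero_iff] at hz1
  have hchord := four_mul_sq_sub_one_lt_norm_sub_sq (mem_sphere_zero_iff_norm.1 hx)
    (mem_sphere_zero_iff_norm.1 hy) hz hz1
  calc |u x - u y| ≤ |u x| + |u y| := abs_sub _ _
    _ ≤ 2 * M := by linarith [hM x hx, hM y hy]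
    _ < ‖x - y‖ := lt_of_pow_lt_pow_left₀ 2 (norm_nonneg _) (by nlinarith)

end Spacelike

theorem spacelike_on_spheres_general (n : ℕ) (A : Set (EuclideanSpace ℝ (Fin n)))
    (hA1 : A ⊆ ball (0 : EuclideanSpace ℝ (Fin n)) 1)
    (u : EuclideanSpace ℝ (Fin n) → ℝ) (hu : IsSpacelikeOn u Aᶜ)
    (ε₀ : ℝ) (hε₀ : ε₀ ∈ Ioo (0 : ℝ) 1)
    (hmax : IsGreatest (u '' sphere (0 : EuclideanSpace ℝ (Fin n)) 1) (1 - ε₀))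
    (hmin : IsLeast (u '' sphere (0 : EuclideanSpace ℝ (Fin n)) 1) (-(1 - ε₀))) :
    (∀ R : ℝ, 1 < R → ∀ x ∈ sphere (0 : EuclideanSpace ℝ (Fin n)) R, |u x| ≤ R - ε₀) ∧
      ∀ R : ℝ, (1 + ε₀ ^ 2) / (2 * ε₀) ≤ R →
        ∀ x ∈ sphere (0 : EuclideanSpace ℝ (Fin n)) R,
          ∀ y ∈ sphere (0 : EuclideanSpace ℝ (Fin n)) R,
            x ≠ y → |u x - u y| < ‖x - y‖ := by
  obtain ⟨hε0, -⟩ := hε₀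
  have hu' : IsSpacelikeOn u (ball 0 1)ᶜ := hu.mono (compl_subset_compl.2 hA1)
  have hunit : ∀ w ∈ sphere (0 : EuclideanSpace ℝ (Fin n)) 1, |u w| ≤ 1 - ε₀ := fun w hw ↦
    abs_le.2 ⟨hmin.2 (mem_image_of_mem u hw), hmax.2 (mem_image_of_mem u hw)⟩
  have hsphere : ∀ R : ℝ, 1 ≤ R → ∀ x ∈ sphere (0 : EuclideanSpace ℝ (Fin n)) R,
      |u x| ≤ R - ε₀ := by
    intro R hR x hx
    rw [mem_sphere_zero_iff_norm] at hx
    linarith [hu'.abs_le_of_compl_ball hunit (hx ▸ hR)]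
  refine ⟨fun R hR ↦ hsphere R hR.le, fun R hR x hx y hy hxy ↦ ?_⟩
  have hR' : 1 + ε₀ ^ 2 ≤ R * (2 * ε₀) := (div_le_iff₀ (by positivity)).1 hR
  have hR1 : 1 ≤ R := by nlinarith [sq_nonneg (1 - ε₀)]
  exact hu'.abs_sub_lt_of_compl_ball (hsphere R hR1) (by nlinarith) hx hy hxy

/-- If a spacelike function on `ℝⁿ \ A` (`A ⊆ B₁`) has `max_{∂B₁} u = -min_{∂B₁} u = 1 - ε₀`,
then `max_{∂B_R}|u| ≤ R - ε₀` for `R > 1`, and `u` is spacelike with no segment restriction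
on every sphere `∂B_R` with `R ≥ (1+ε₀²)/(2ε₀)`. -/
theorem spacelike_on_spheres (n : ℕ) (A : Set (EuclideanSpace ℝ (Fin n)))
    (hAbd : IsBounded A) (hA1 : A ⊆ ball (0 : EuclideanSpace ℝ (Fin n)) 1)
    (u : EuclideanSpace ℝ (Fin n) → ℝ) (hu : IsSpacelikeOn u Aᶜ)
    (ε₀ : ℝ) (hε₀ : ε₀ ∈ Ioo (0 : ℝ) 1)
    (hmax : IsGreatest (u '' sphere (0 : EuclideanSpace ℝ (Fin n)) 1) (1 - ε₀))
    (hmin : IsLeast (u '' sphere (0 : EuclideanSpace ℝ (Fin n)) 1) (-(1 - ε₀))) :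
    (∀ R : ℝ, 1 < R → ∀ x ∈ sphere (0 : EuclideanSpace ℝ (Fin n)) R, |u x| ≤ R - ε₀) ∧
      ∀ R : ℝ, (1 + ε₀ ^ 2) / (2 * ε₀) ≤ R →
        ∀ x ∈ sphere (0 : EuclideanSpace ℝ (Fin n)) R,
          ∀ y ∈ sphere (0 : EuclideanSpace ℝ (Fin n)) R,
            x ≠ y → |u x - u y| < ‖x - y‖ :=
  spacelike_on_spheres_general n A hA1 u hu ε₀ hε₀ hmax hmin
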